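/- arXiv:1609.09594 — 11 statements merged into one kernel-verified Lean document; each statement's English description precedes it below -/
import Mathlib

section
/- Let A, σ, γ, v0 be positive real numbers and define v(t) = v0·exp(−σt). Fix t_s ∈ ℝ and let t_c ∈ [t_s, t_s + γ]. Then the set [v(t_s), v(t_s)·exp(Aγ)] ∪ [−v(t_s)·exp(Aγ), −v(t_s)] is contained in the set [v(t_c), v(t_c)·exp((A+σ)γ)] ∪ [−v(t_c)·exp((A+σ)γ), −v(t_c)]. -/
/-! Both intervals of the sensor's set sit inside the corresponding intervals of the
controller's set. The threshold `v` decays, so `v tc ≤ v ts`; over a delay of at most `γ` it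
decays by at most the factor `exp (σ * γ)`, so `v ts * exp (A * γ) ≤ v tc * exp ((A + σ) * γ)`. -/

open Real Set

section ExponentialThreshold

variable {v0 σ : ℝ} {v : ℝ → ℝ}

lemma antitone_of_eq_mul_exp_neg_mul (hv0 : 0 ≤ v0) (hσ : 0 ≤ σ)
    (hv : ∀ t, v t = v0 * exp (-σ * t)) : Antitone v := by
  intro s t hst
  rw [hv, hv]
  gcongr v0 * exp ?_
  nlinarith

lemma le_mul_exp_of_le_add_of_eq_mul_exp_neg_mul (hv0 : 0 ≤ v0) (hσ : 0 ≤ σ)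
    (hv : ∀ t, v t = v0 * exp (-σ * t)) {s t γ : ℝ} (hts : t ≤ s + γ) :
    v s ≤ v t * exp (σ * γ) := by
  rw [hv, hv, mul_assoc, ← exp_add]
  gcongr v0 * exp ?_
  nlinarith

end ExponentialThreshold

theorem sensor_uncertainty_subset_controller_uncertainty_general
    (A σ γ v0 : ℝ) (hσ : 0 < σ) (hv0 : 0 < v0)
    (v : ℝ → ℝ) (hv : ∀ t, v t = v0 * Real.exp (-σ * t))
    (ts tc : ℝ) (htc : tc ∈ Set.Icc ts (ts + γ)) :
    (Set.Icc (v ts) (v ts * Real.exp (A * γ)) ∪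
      Set.Icc (-(v ts * Real.exp (A * γ))) (-(v ts))) ⊆
    (Set.Icc (v tc) (v tc * Real.exp ((A + σ) * γ)) ∪
      Set.Icc (-(v tc * Real.exp ((A + σ) * γ))) (-(v tc))) := by
  have hlo : v tc ≤ v ts := antitone_of_eq_mul_exp_neg_mul hv0.le hσ.le hv htc.1
  have hhi : v ts * exp (A * γ) ≤ v tc * exp ((A + σ) * γ) :=
    calc v ts * exp (A * γ)
        ≤ v tc * exp (σ * γ) * exp (A * γ) := by
          gcongr
          exact le_mul_exp_of_le_add_of_eq_mul_exp_neg_mul hv0.le hσ.le hv htc.2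
      _ = v tc * exp ((A + σ) * γ) := by rw [mul_assoc, ← exp_add]; ring_nf
  exact union_subset_union (Icc_subset_Icc hlo hhi)
    (Icc_subset_Icc (neg_le_neg hhi) (neg_le_neg hlo))

/-- Lemma 1 of the paper: the sensor's uncertainty set Ω(z(t_c)|t_s) is contained in the
controller's uncertainty set Ω(z(t_c)|t_c). -/
theorem sensor_uncertainty_subset_controller_uncertainty
    (A σ γ v0 : ℝ) (hA : 0 < A) (hσ : 0 < σ) (hγ : 0 < γ) (hv0 : 0 < v0)
    (v : ℝ → ℝ) (hv : ∀ t, v t = v0 * Real.exp (-σ * t))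
    (ts tc : ℝ) (htc : tc ∈ Set.Icc ts (ts + γ)) :
    (Set.Icc (v ts) (v ts * Real.exp (A * γ)) ∪
      Set.Icc (-(v ts * Real.exp (A * γ))) (-(v ts))) ⊆
    (Set.Icc (v tc) (v tc * Real.exp ((A + σ) * γ)) ∪
      Set.Icc (-(v tc * Real.exp ((A + σ) * γ))) (-(v tc))) :=
  sensor_uncertainty_subset_controller_uncertainty_general A σ γ v0 hσ hv0 v hv ts tc htc
end

section
/- Let A, σ, γ, v0 > 0 and 0 < ρ0 < 1, and set v(t) = v0·exp(−σt). Suppose t_s ≤ t_c ≤ t_s′ are real numbers and z′ ∈ ℝ satisfies |z′| ≤ ρ0·exp(−σγ)·v(t_s) and |z′|·exp(A·(t_s′ − t_c)) = v(t_s′). Then t_s′ − t_s ≥ (−ln(ρ0·exp(−σγ)))/(A+σ), and this lower bound is a positive real number. -/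
/-!
Between the reset and the next trigger the error grows at most like `exp (A t)` while the
threshold decays like `exp (-σ t)`. Since the reset value is at most `ρ0 exp (-σγ)` times the
threshold at the previous trigger, the gap between the two curves closes by a factor
`exp ((A + σ) t)` at most, so `exp ((A + σ) (ts' - ts))` must reach `1 / (ρ0 exp (-σγ))`.
-/

open Real

lemma neg_log_le_of_one_le_mul_exp {ρ x : ℝ} (hρ : 0 < ρ) (h : 1 ≤ ρ * exp x) :
    -log ρ ≤ x := by
  have h0 := log_nonneg h
  rw [log_mul hρ.ne' (exp_pos x).ne', log_exp] at h0
  linarith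

lemma one_le_mul_exp_of_reset_le {A σ v0 ρ ts tc ts' z : ℝ} (hA : 0 ≤ A) (hv0 : 0 < v0)
    (h1 : ts ≤ tc) (hz : |z| ≤ ρ * (v0 * exp (-σ * ts)))
    (htrig : |z| * exp (A * (ts' - tc)) = v0 * exp (-σ * ts')) :
    1 ≤ ρ * exp ((A + σ) * (ts' - ts)) := by
  have hgrowth : exp (A * (ts' - tc)) ≤ exp (A * (ts' - ts)) :=
    exp_le_exp.2 (mul_le_mul_of_nonneg_left (by linarith) hA)
  have hexp : exp (-σ * ts) * exp (A * (ts' - ts)) =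
      exp (-σ * ts') * exp ((A + σ) * (ts' - ts)) := by
    rw [← exp_add, ← exp_add]
    ring_nf
  have hbound : v0 * exp (-σ * ts') ≤ v0 * exp (-σ * ts') * (ρ * exp ((A + σ) * (ts' - ts))) :=
    calc v0 * exp (-σ * ts') = |z| * exp (A * (ts' - tc)) := htrig.symm
      _ ≤ ρ * (v0 * exp (-σ * ts)) * exp (A * (ts' - ts)) :=
        mul_le_mul hz hgrowth (exp_pos _).le ((abs_nonneg z).trans hz)
      _ = v0 * exp (-σ * ts') * (ρ * exp ((A + σ) * (ts' - ts))) := by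
        linear_combination (ρ * v0) * hexp
  exact (le_mul_iff_one_le_right (mul_pos hv0 (exp_pos _))).1 hbound

theorem triggering_interval_lower_bound_general
    (A σ γ v0 ρ0 : ℝ) (hA : 0 < A) (hσ : 0 < σ) (hγ : 0 < γ) (hv0 : 0 < v0)
    (hρ0 : 0 < ρ0) (hρ1 : ρ0 < 1)
    (v : ℝ → ℝ) (hv : ∀ t, v t = v0 * Real.exp (-σ * t))
    (ts tc ts' z' : ℝ) (h1 : ts ≤ tc)
    (hz : |z'| ≤ ρ0 * Real.exp (-σ * γ) * v ts)
    (htrig : |z'| * Real.exp (A * (ts' - tc)) = v ts') :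
    ts' - ts ≥ (-Real.log (ρ0 * Real.exp (-σ * γ))) / (A + σ) ∧
      0 < (-Real.log (ρ0 * Real.exp (-σ * γ))) / (A + σ) := by
  have hAσ : 0 < A + σ := by linarith
  have hρ : 0 < ρ0 * exp (-σ * γ) := mul_pos hρ0 (exp_pos _)
  have hρ_lt_one : ρ0 * exp (-σ * γ) < 1 :=
    mul_lt_one_of_nonneg_of_lt_one_left hρ0.le hρ1 (exp_le_one_iff.2 (by nlinarith))
  rw [hv] at hz htrig
  have hkey := one_le_mul_exp_of_reset_le hA.le hv0 h1 hz htrig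
  refine ⟨?_, div_pos (neg_pos.2 (log_neg hρ hρ_lt_one)) hAσ⟩
  rw [ge_iff_le, div_le_iff₀ hAσ]
  exact (neg_log_le_of_one_le_mul_exp hρ hkey).trans_eq (mul_comm _ _)

/-- Uniform positive lower bound on a triggering interval (rules out Zeno behavior). -/
theorem triggering_interval_lower_bound
    (A σ γ v0 ρ0 : ℝ) (hA : 0 < A) (hσ : 0 < σ) (hγ : 0 < γ) (hv0 : 0 < v0)
    (hρ0 : 0 < ρ0) (hρ1 : ρ0 < 1)
    (v : ℝ → ℝ) (hv : ∀ t, v t = v0 * Real.exp (-σ * t))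
    (ts tc ts' z' : ℝ) (h1 : ts ≤ tc) (h2 : tc ≤ ts')
    (hz : |z'| ≤ ρ0 * Real.exp (-σ * γ) * v ts)
    (htrig : |z'| * Real.exp (A * (ts' - tc)) = v ts') :
    ts' - ts ≥ (-Real.log (ρ0 * Real.exp (-σ * γ))) / (A + σ) ∧
      0 < (-Real.log (ρ0 * Real.exp (-σ * γ))) / (A + σ) :=
  triggering_interval_lower_bound_general A σ γ v0 ρ0 hA hσ hγ hv0 hρ0 hρ1 v hv ts tc ts' z' h1 hz
    htrig
end

section
/- Let A, σ, γ, v0 > 0 and 0 < ρ0 < 1, and set v(t) = v0·exp(−σt). Let (t_s^k)_{k∈ℕ} and (t_c^k)_{k∈ℕ} be real sequences with t_s^k ≤ t_c^k ≤ t_s^{k+1} for all k, and let (z_k)_{k∈ℕ} be reals with |z_k| ≤ ρ0·exp(−σγ)·v(t_s^k) and |z_k|·exp(A·(t_s^{k+1} − t_c^k)) = v(t_s^{k+1}) for all k. Then limsup_{N→∞} N / (Σ_{k=1}^N (t_s^{k+1} − t_s^k)) ≤ (A+σ)/(−ln(ρ0·exp(−σγ))). -/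
/-!
Write `ρ = ρ0·exp(-σγ) < 1` and `Δ = t_s^{k+1} - t_s^k`. Between receptions the error grows from
at most `ρ·v(t_s^k)` by a factor at most `exp(AΔ)`, while the threshold has only shrunk by
`exp(-σΔ)`; so it cannot reach the threshold before `(A + σ)Δ ≥ -log ρ`. A uniform lower bound `c`
on the inter-event times bounds every average rate `N / Σ Δ_k` by `1 / c`.
-/

open Filter

theorem neg_log_le_mul_inter_event_time {A σ ρ v0 s τ s' w : ℝ} (hA : 0 ≤ A) (hρ : 0 < ρ)
    (hv0 : 0 < v0) (hsτ : s ≤ τ) (hw : |w| ≤ ρ * (v0 * Real.exp (-σ * s)))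
    (htrig : |w| * Real.exp (A * (s' - τ)) = v0 * Real.exp (-σ * s')) :
    -Real.log ρ ≤ (A + σ) * (s' - s) := by
  have hgrowth : Real.exp (A * (s' - τ)) ≤ Real.exp (A * (s' - s)) :=
    Real.exp_le_exp.2 (by nlinarith)
  have hbound : v0 * Real.exp (-σ * s') ≤
      v0 * Real.exp (Real.log ρ + -σ * s + A * (s' - s)) := by
    rw [Real.exp_add, Real.exp_add, Real.exp_log hρ, ← htrig]
    calc |w| * Real.exp (A * (s' - τ))
        ≤ ρ * (v0 * Real.exp (-σ * s)) * Real.exp (A * (s' - s)) :=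
          mul_le_mul hw hgrowth (Real.exp_pos _).le (by positivity)
      _ = _ := by ring
  have := Real.exp_le_exp.1 (le_of_mul_le_mul_left hbound hv0)
  linarith

theorem limsup_div_sum_le_inv {Δ : ℕ → ℝ} {c : ℝ} (hc : 0 < c) (hΔ : ∀ k, c ≤ Δ k) :
    limsup (fun N : ℕ => (N : ℝ) / ∑ k ∈ Finset.Icc 1 N, Δ k) atTop ≤ 1 / c := by
  have hsum (N : ℕ) : N * c ≤ ∑ k ∈ Finset.Icc 1 N, Δ k := by
    simpa using Finset.card_nsmul_le_sum (Finset.Icc 1 N) Δ c fun k _ => hΔ k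
  have hsum_nonneg (N : ℕ) : 0 ≤ ∑ k ∈ Finset.Icc 1 N, Δ k :=
    (mul_nonneg N.cast_nonneg hc.le).trans (hsum N)
  have hbounded : IsBoundedUnder (· ≥ ·) atTop
      (fun N : ℕ => (N : ℝ) / ∑ k ∈ Finset.Icc 1 N, Δ k) :=
    isBoundedUnder_of ⟨0, fun N => div_nonneg N.cast_nonneg (hsum_nonneg N)⟩
  refine limsup_le_of_le hbounded.isCoboundedUnder_le (Eventually.of_forall fun N => ?_)
  refine div_le_of_le_mul₀ (hsum_nonneg N) (by positivity) ?_
  rw [one_div_mul_eq_div, le_div_iff₀ hc]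
  exact hsum N

/-- Lemma 3 ('Lemma1') of the paper: upper bound on the triggering rate. -/
theorem triggering_rate_upper_bound
    (A σ γ v0 ρ0 : ℝ) (hA : 0 < A) (hσ : 0 < σ) (hγ : 0 < γ) (hv0 : 0 < v0)
    (hρ0 : 0 < ρ0) (hρ1 : ρ0 < 1)
    (v : ℝ → ℝ) (hv : ∀ t, v t = v0 * Real.exp (-σ * t))
    (ts tc : ℕ → ℝ) (z : ℕ → ℝ)
    (horder : ∀ k, ts k ≤ tc k ∧ tc k ≤ ts (k + 1))
    (hz : ∀ k, |z k| ≤ ρ0 * Real.exp (-σ * γ) * v (ts k))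
    (htrig : ∀ k, |z k| * Real.exp (A * (ts (k + 1) - tc k)) = v (ts (k + 1))) :
    Filter.limsup
      (fun N : ℕ => (N : ℝ) / ∑ k ∈ Finset.Icc 1 N, (ts (k + 1) - ts k))
      Filter.atTop
      ≤ (A + σ) / (-Real.log (ρ0 * Real.exp (-σ * γ))) := by
  set ρ := ρ0 * Real.exp (-σ * γ)
  have hρ_pos : 0 < ρ := by positivity
  have hρ_lt_one : ρ < 1 :=
    mul_lt_one_of_nonneg_of_lt_one_left hρ0.le hρ1 (Real.exp_le_one_iff.2 (by nlinarith))
  have hAσ : 0 < A + σ := add_pos hA hσ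
  have hgap (k : ℕ) : -Real.log ρ / (A + σ) ≤ ts (k + 1) - ts k := by
    rw [div_le_iff₀' hAσ]
    refine neg_log_le_mul_inter_event_time (w := z k) hA.le hρ_pos hv0 (horder k).1 ?_ ?_
    · simpa only [hv, mul_assoc] using hz k
    · simpa only [hv] using htrig k
  have hc : 0 < -Real.log ρ / (A + σ) :=
    div_pos (neg_pos.2 (Real.log_neg hρ_pos hρ_lt_one)) hAσ
  simpa only [one_div_div] using limsup_div_sum_le_inv hc hgap
end

section
/- Let A, σ, γ, v0 > 0, 0 < ρ0 < 1, ν ≥ 1, and set v(t) = v0·exp(−σt) and β = (1/A)·ln(1 + 2ρ0·exp(−σγ)). Suppose t_s ≤ t_c ≤ t_s + β, t_c ≤ t_s′, and z′ ∈ ℝ satisfies |z′| ≥ (1/ν)·ρ0·exp(−σγ)·v(t_s) and |z′|·exp(A·(t_s′ − t_c)) = v(t_s′). Then t_s′ − t_s ≤ (ln ν + ln(2 + exp(σγ)/ρ0))/(A+σ). -/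
/-!
In logarithms, the growth `A (t_s' - t_c)` of the error, started from at least `c · v(t_s)` with
`c = ρ₀ e^{-σγ} / ν`, plus the decay `σ (t_s' - t_s)` of the threshold cannot exceed `-log c`.
The delay adds at most `A β = log (1 + 2ρ₀ e^{-σγ})`, and
`log (1 + 2ρ₀ e^{-σγ}) + σγ - log ρ₀ = log (2 + e^{σγ} / ρ₀)`.
-/

open Real

lemma mul_sub_add_mul_sub_le_neg_log {A σ c v₀ a tₛ t₀ t : ℝ} (hc : 0 < c) (hv₀ : 0 < v₀)
    (ha : c * (v₀ * exp (-σ * tₛ)) ≤ a)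
    (htrig : a * exp (A * (t - t₀)) = v₀ * exp (-σ * t)) :
    A * (t - t₀) + σ * (t - tₛ) ≤ -log c := by
  let X := A * (t - t₀) + σ * (t - tₛ)
  have hshift : exp (-σ * tₛ) * exp (A * (t - t₀)) = exp (-σ * t) * exp X := by
    rw [← exp_add, ← exp_add]
    congr 1
    ring
  have hscaled : c * exp X * (v₀ * exp (-σ * t)) ≤ 1 * (v₀ * exp (-σ * t)) := calc
    c * exp X * (v₀ * exp (-σ * t)) = c * (v₀ * exp (-σ * tₛ)) * exp (A * (t - t₀)) := by
      linear_combination (-(c * v₀)) * hshift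
    _ ≤ a * exp (A * (t - t₀)) := mul_le_mul_of_nonneg_right ha (exp_nonneg _)
    _ = 1 * (v₀ * exp (-σ * t)) := by rw [htrig, one_mul]
  have hlog := log_le_log (by positivity) (le_of_mul_le_mul_right hscaled (by positivity))
  rw [log_mul hc.ne' (exp_pos X).ne', log_exp, log_one] at hlog
  linarith

lemma log_two_add_exp_div {ρ : ℝ} (hρ : 0 < ρ) (x : ℝ) :
    log (2 + exp x / ρ) = log (1 + 2 * ρ * exp (-x)) + x - log ρ := by
  have hsplit : 2 + exp x / ρ = (1 + 2 * ρ * exp (-x)) * (exp x / ρ) := by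
    rw [exp_neg]
    field_simp
    ring
  rw [hsplit, log_mul (by positivity) (by positivity), log_div (exp_pos x).ne' hρ.ne', log_exp]
  ring

theorem triggering_interval_upper_bound_general
    (A σ γ v0 ρ0 ν : ℝ) (hA : 0 < A) (hσ : 0 < σ) (hv0 : 0 < v0)
    (hρ0 : 0 < ρ0) (hν : 1 ≤ ν)
    (v : ℝ → ℝ) (hv : ∀ t, v t = v0 * Real.exp (-σ * t))
    (β : ℝ) (hβ : β = (1 / A) * Real.log (1 + 2 * ρ0 * Real.exp (-σ * γ)))
    (ts tc ts' z' : ℝ) (h2 : tc ≤ ts + β)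
    (hz : |z'| ≥ (1 / ν) * ρ0 * Real.exp (-σ * γ) * v ts)
    (htrig : |z'| * Real.exp (A * (ts' - tc)) = v ts') :
    ts' - ts ≤ (Real.log ν + Real.log (2 + Real.exp (σ * γ) / ρ0)) / (A + σ) := by
  have hν₀ : 0 < ν := one_pos.trans_le hν
  rw [hv] at hz htrig
  have hgap := mul_sub_add_mul_sub_le_neg_log (by positivity) hv0 hz htrig
  have hc : log ((1 / ν) * ρ0 * exp (-σ * γ)) = -log ν + log ρ0 - σ * γ := by
    rw [log_mul (by positivity) (exp_pos _).ne', log_mul (by positivity) hρ0.ne', one_div,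
      log_inv, log_exp]
    ring
  have hdelay : A * (tc - ts) ≤ log (1 + 2 * ρ0 * exp (-σ * γ)) := by
    calc A * (tc - ts) ≤ A * β := by gcongr; linarith
      _ = _ := by rw [hβ]; field_simp
  rw [le_div_iff₀ (by positivity), log_two_add_exp_div hρ0, ← neg_mul]
  linarith

/-- Per-interval upper bound on the triggering interval under ν-precision quantization
(underlying Lemma 4 of the paper). -/
theorem triggering_interval_upper_bound
    (A σ γ v0 ρ0 ν : ℝ) (hA : 0 < A) (hσ : 0 < σ) (hγ : 0 < γ) (hv0 : 0 < v0)
    (hρ0 : 0 < ρ0) (hρ1 : ρ0 < 1) (hν : 1 ≤ ν)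
    (v : ℝ → ℝ) (hv : ∀ t, v t = v0 * Real.exp (-σ * t))
    (β : ℝ) (hβ : β = (1 / A) * Real.log (1 + 2 * ρ0 * Real.exp (-σ * γ)))
    (ts tc ts' z' : ℝ) (h1 : ts ≤ tc) (h2 : tc ≤ ts + β) (h3 : tc ≤ ts')
    (hz : |z'| ≥ (1 / ν) * ρ0 * Real.exp (-σ * γ) * v ts)
    (htrig : |z'| * Real.exp (A * (ts' - tc)) = v ts') :
    ts' - ts ≤ (Real.log ν + Real.log (2 + Real.exp (σ * γ) / ρ0)) / (A + σ) :=
  triggering_interval_upper_bound_general A σ γ v0 ρ0 ν hA hσ hv0 hρ0 hν v hv β hβ ts tc ts' z' h2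
    hz htrig
end

section
/- Let A, σ, γ > 0, 0 < ρ0 < 1, v_s > 0, and set ρ = ρ0·exp(−σγ)·v_s. If the set Ω = [v_s, v_s·exp(Aγ)] ∪ [−v_s·exp(Aγ), −v_s] is contained in the union of N closed intervals each of length at most 2ρ, then N ≥ (exp(Aγ) − 1)/(ρ0·exp(−σγ)). -/
/-!
Lebesgue measure: the two components of the uncertainty set are disjoint intervals of length
`vs (exp(Aγ) - 1)` each, while `N` intervals of length at most `2ρ` have total measure at most
`2Nρ`. Hence `vs (exp(Aγ) - 1) ≤ N ρ0 exp(-σγ) vs`, and dividing by `ρ0 exp(-σγ) vs` gives the bound.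
-/

open MeasureTheory Set

theorem volume_le_card_mul_of_subset_iUnion_Icc {ι : Type*} [Fintype ι] {s : Set ℝ}
    {a b : ι → ℝ} {L : ℝ} (hlen : ∀ i, b i - a i ≤ L) (hs : s ⊆ ⋃ i, Icc (a i) (b i)) :
    volume s ≤ Fintype.card ι * ENNReal.ofReal L :=
  calc volume s ≤ volume (⋃ i, Icc (a i) (b i)) := measure_mono hs
    _ ≤ ∑ i, volume (Icc (a i) (b i)) := measure_iUnion_fintype_le _ _
    _ ≤ ∑ _i : ι, ENNReal.ofReal L := by
        gcongr with i
        rw [Real.volume_Icc]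
        exact ENNReal.ofReal_le_ofReal (hlen i)
    _ = Fintype.card ι * ENNReal.ofReal L := by simp

theorem volume_Icc_union_Icc_neg {c : ℝ} (hc : 0 < c) (d : ℝ) :
    volume (Icc c d ∪ Icc (-d) (-c)) = ENNReal.ofReal (2 * (d - c)) := by
  have hdisj : Disjoint (Icc c d) (Icc (-d) (-c)) :=
    disjoint_left.mpr fun x hx hx' => by linarith [hx.1, hx'.2]
  rw [measure_union hdisj measurableSet_Icc, Real.volume_Icc, Real.volume_Icc,
    ENNReal.ofReal_mul zero_le_two, ENNReal.ofReal_ofNat, two_mul, neg_sub_neg]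

theorem sub_le_card_mul_of_Icc_union_Icc_neg_subset {ι : Type*} [Fintype ι] {c d r : ℝ}
    (hc : 0 < c) (hr : 0 ≤ r) {a b : ι → ℝ} (hlen : ∀ i, b i - a i ≤ 2 * r)
    (hcov : Icc c d ∪ Icc (-d) (-c) ⊆ ⋃ i, Icc (a i) (b i)) :
    d - c ≤ Fintype.card ι * r := by
  have hvol := volume_le_card_mul_of_subset_iUnion_Icc hlen hcov
  rw [volume_Icc_union_Icc_neg hc, ← ENNReal.ofReal_natCast, ← ENNReal.ofReal_mul (by positivity),
    ENNReal.ofReal_le_ofReal_iff (by positivity)] at hvol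
  linarith

theorem covering_sensor_uncertainty_lower_bound_general
    (A σ γ ρ0 vs : ℝ)
    (hρ0 : 0 < ρ0) (hvs : 0 < vs)
    (ρ : ℝ) (hρ : ρ = ρ0 * Real.exp (-σ * γ) * vs)
    (N : ℕ) (a b : Fin N → ℝ)
    (hlen : ∀ i, b i - a i ≤ 2 * ρ)
    (hcov : (Set.Icc vs (vs * Real.exp (A * γ)) ∪
        Set.Icc (-(vs * Real.exp (A * γ))) (-vs)) ⊆ ⋃ i, Set.Icc (a i) (b i)) :
    (N : ℝ) ≥ (Real.exp (A * γ) - 1) / (ρ0 * Real.exp (-σ * γ)) := by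
  have hκ : 0 < ρ0 * Real.exp (-σ * γ) := by positivity
  have hbound := sub_le_card_mul_of_Icc_union_Icc_neg_subset hvs (by rw [hρ]; positivity) hlen hcov
  rw [Fintype.card_fin, hρ] at hbound
  rw [ge_iff_le, div_le_iff₀ hκ]
  exact le_of_mul_le_mul_right (by linarith) hvs

/-- Lemma 2 of the paper (covering form): covering the sensor's uncertainty set by N
closed intervals of length at most 2ρ requires N ≥ (exp(Aγ) − 1)/(ρ0·exp(−σγ)). -/
theorem covering_sensor_uncertainty_lower_bound
    (A σ γ ρ0 vs : ℝ) (hA : 0 < A) (hσ : 0 < σ) (hγ : 0 < γ)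
    (hρ0 : 0 < ρ0) (hρ1 : ρ0 < 1) (hvs : 0 < vs)
    (ρ : ℝ) (hρ : ρ = ρ0 * Real.exp (-σ * γ) * vs)
    (N : ℕ) (a b : Fin N → ℝ)
    (hlen : ∀ i, b i - a i ≤ 2 * ρ)
    (hcov : (Set.Icc vs (vs * Real.exp (A * γ)) ∪
        Set.Icc (-(vs * Real.exp (A * γ))) (-vs)) ⊆ ⋃ i, Set.Icc (a i) (b i)) :
    (N : ℝ) ≥ (Real.exp (A * γ) - 1) / (ρ0 * Real.exp (-σ * γ)) :=
  covering_sensor_uncertainty_lower_bound_general A σ γ ρ0 vs hρ0 hvs ρ hρ N a b hlen hcov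
end

section
/- Let A, σ > 0, t ≥ 0, L > 0. (i) For every α ∈ ℝ, the set {x ∈ ℝ : |exp(At)·x + α| ≤ L·exp(−σt)} has Lebesgue measure 2L·exp(−(A+σ)t). (ii) Consequently, if [−L, L] ⊆ ⋃_{i=1}^N {x ∈ ℝ : |exp(At)·x + α_i| ≤ L·exp(−σt)} for some α_1, …, α_N ∈ ℝ, then N ≥ exp((A+σ)t). -/
/-!
The set `{x | |e^{At} x + α| ≤ L e^{-σt}}` is an interval of length `2L e^{-(A+σ)t}`, whatever `α`.
Covering `[-L, L]`, of length `2L`, by `N` such intervals forces `2L ≤ N · 2L e^{-(A+σ)t}` by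
subadditivity of Lebesgue measure.
-/

open MeasureTheory Set

lemma setOf_abs_mul_add_le_eq_Icc {c : ℝ} (hc : 0 < c) (α r : ℝ) :
    {x : ℝ | |c * x + α| ≤ r} = Icc ((-α - r) / c) ((-α + r) / c) := by
  ext x
  simp only [mem_ofPred_eq, mem_Icc, abs_le, div_le_iff₀ hc, le_div_iff₀ hc]
  constructor <;> rintro ⟨h₁, h₂⟩ <;> constructor <;> linarith

/-- For `r < 0` both sides vanish, the right one because `ENNReal.ofReal` truncates. -/
lemma volume_setOf_abs_mul_add_le {c : ℝ} (hc : 0 < c) (α r : ℝ) :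
    volume {x : ℝ | |c * x + α| ≤ r} = ENNReal.ofReal (2 * r / c) := by
  rw [setOf_abs_mul_add_le_eq_Icc hc, Real.volume_Icc]
  congr 1
  ring

lemma measure_le_card_mul_of_subset_iUnion {α ι : Type*} [MeasurableSpace α] [Fintype ι]
    {μ : Measure α} {s : Set α} {t : ι → Set α} (hst : s ⊆ ⋃ i, t i) {m : ENNReal}
    (ht : ∀ i, μ (t i) ≤ m) : μ s ≤ Fintype.card ι * m :=
  calc μ s ≤ ∑ i, μ (t i) := (measure_mono hst).trans (measure_iUnion_fintype_le μ t)
    _ ≤ ∑ _i : ι, m := Finset.sum_le_sum fun i _ => ht i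
    _ = Fintype.card ι * m := by simp

lemma sub_le_card_mul_of_Icc_subset_iUnion {ι : Type*} [Fintype ι] {a b δ : ℝ} (hδ : 0 ≤ δ)
    {t : ι → Set ℝ} (hcover : Icc a b ⊆ ⋃ i, t i) (ht : ∀ i, volume (t i) ≤ ENNReal.ofReal δ) :
    b - a ≤ Fintype.card ι * δ := by
  have h := measure_le_card_mul_of_subset_iUnion hcover ht
  rwa [Real.volume_Icc, ← ENNReal.ofReal_natCast, ← ENNReal.ofReal_mul (Nat.cast_nonneg _),
    ENNReal.ofReal_le_ofReal_iff (by positivity)] at h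

lemma exp_neg_add_mul_eq_div (A σ t L : ℝ) :
    2 * (L * Real.exp (-σ * t)) / Real.exp (A * t) = 2 * L * Real.exp (-(A + σ) * t) := by
  rw [div_eq_iff (Real.exp_pos _).ne', mul_assoc, ← Real.exp_add]
  ring_nf

theorem initial_condition_covering_lower_bound_general
    (A σ : ℝ) (t : ℝ) (L : ℝ) (hL : 0 < L) :
    (∀ α : ℝ,
      volume {x : ℝ | |Real.exp (A * t) * x + α| ≤ L * Real.exp (-σ * t)} =
        ENNReal.ofReal (2 * L * Real.exp (-(A + σ) * t))) ∧
    (∀ (N : ℕ) (α : Fin N → ℝ),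
      Set.Icc (-L) L ⊆
        ⋃ i, {x : ℝ | |Real.exp (A * t) * x + α i| ≤ L * Real.exp (-σ * t)} →
      (N : ℝ) ≥ Real.exp ((A + σ) * t)) := by
  have hvol : ∀ α : ℝ,
      volume {x : ℝ | |Real.exp (A * t) * x + α| ≤ L * Real.exp (-σ * t)} =
        ENNReal.ofReal (2 * L * Real.exp (-(A + σ) * t)) := fun α => by
    rw [volume_setOf_abs_mul_add_le (Real.exp_pos _), exp_neg_add_mul_eq_div]
  refine ⟨hvol, fun N α hcover => ?_⟩
  have hlen := sub_le_card_mul_of_Icc_subset_iUnion (by positivity) hcover fun i => (hvol (α i)).le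
  rw [Fintype.card_fin, neg_mul, Real.exp_neg] at hlen
  field_simp at hlen
  linarith

/-- Covering argument proving Theorem 1(ii) of the paper. -/
theorem initial_condition_covering_lower_bound
    (A σ : ℝ) (hA : 0 < A) (hσ : 0 < σ) (t : ℝ) (ht : 0 ≤ t) (L : ℝ) (hL : 0 < L) :
    (∀ α : ℝ,
      volume {x : ℝ | |Real.exp (A * t) * x + α| ≤ L * Real.exp (-σ * t)} =
        ENNReal.ofReal (2 * L * Real.exp (-(A + σ) * t))) ∧
    (∀ (N : ℕ) (α : Fin N → ℝ),
      Set.Icc (-L) L ⊆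
        ⋃ i, {x : ℝ | |Real.exp (A * t) * x + α i| ≤ L * Real.exp (-σ * t)} →
      (N : ℝ) ≥ Real.exp ((A + σ) * t)) :=
  initial_condition_covering_lower_bound_general A σ t L hL
end

section
/- Let A, σ, γ, v0 > 0 and 0 < ρ0 < 1, and define v(t) = v0·exp(−σt). Suppose t_s ≤ t_c ≤ t_s + γ, ε ∈ {−1, 1}, and q ∈ ℝ satisfies |t_s − q| ≤ (1/(A+σ))·ln(1 + ρ0·exp(−(σ+A)γ)). Then |ε·v(t_s)·exp(A·(t_c − t_s)) − ε·v(q)·exp(A·(t_c − q))| ≤ ρ0·exp(−σγ)·v(t_s). -/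
/-!
With `B = A + σ`, both terms share the factor `ε · v0 · exp (A tc)`, and what remains is
`exp (-B ts) - exp (-B q)`. The quantization bound says `B |ts - q| ≤ log (1 + ρ0 exp (-B γ))`,
so this difference is at most `ρ0 exp (-B γ) exp (-B ts)`. Finally the surplus growth
`exp (A (tc - ts - γ)) ≤ 1` is absorbed because the delay is at most `γ`.
-/

open Real

lemma Real.abs_exp_sub_one_le_exp_abs_sub_one (x : ℝ) : |exp x - 1| ≤ exp |x| - 1 := by
  rcases le_or_gt 0 x with hx | hx
  · rw [abs_of_nonneg hx, abs_of_nonneg (sub_nonneg.mpr (one_le_exp hx))]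
  · have hexp : exp x * exp (-x) = 1 := by rw [← exp_add, add_neg_cancel, exp_zero]
    rw [abs_of_neg hx, abs_of_nonpos (sub_nonpos.mpr (exp_le_one_iff.mpr hx.le))]
    have hcross : 0 ≤ (1 - exp x) * (exp (-x) - 1) :=
      mul_nonneg (sub_nonneg.mpr (exp_le_one_iff.mpr hx.le))
        (sub_nonneg.mpr (one_le_exp (neg_nonneg.mpr hx.le)))
    nlinarith

lemma Real.abs_exp_sub_exp_le (a b : ℝ) : |exp b - exp a| ≤ exp a * (exp |b - a| - 1) := by
  have hsplit : exp b - exp a = exp a * (exp (b - a) - 1) := by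
    rw [mul_sub, ← exp_add, add_sub_cancel, mul_one]
  rw [hsplit, abs_mul, abs_of_pos (exp_pos a)]
  exact mul_le_mul_of_nonneg_left (abs_exp_sub_one_le_exp_abs_sub_one _) (exp_pos a).le

lemma Real.abs_exp_sub_exp_le_of_abs_sub_le_log {a b δ : ℝ} (hδ : 0 < 1 + δ)
    (hab : |b - a| ≤ log (1 + δ)) : |exp b - exp a| ≤ δ * exp a := by
  have hgap : exp |b - a| - 1 ≤ δ := by
    have := exp_le_exp.mpr hab
    rw [exp_log hδ] at this
    linarith
  calc |exp b - exp a| ≤ exp a * (exp |b - a| - 1) := abs_exp_sub_exp_le a b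
    _ ≤ exp a * δ := mul_le_mul_of_nonneg_left hgap (exp_pos a).le
    _ = δ * exp a := mul_comm _ _

theorem time_quantization_post_jump_bound_general
    (A σ γ v0 ρ0 : ℝ) (hA : 0 < A) (hσ : 0 < σ) (hv0 : 0 < v0)
    (hρ0 : 0 < ρ0)
    (v : ℝ → ℝ) (hv : ∀ t, v t = v0 * Real.exp (-σ * t))
    (ts tc : ℝ) (h2 : tc ≤ ts + γ)
    (ε : ℝ) (hε : ε = -1 ∨ ε = 1)
    (q : ℝ)
    (hq : |ts - q| ≤ (1 / (A + σ)) * Real.log (1 + ρ0 * Real.exp (-(σ + A) * γ))) :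
    |ε * v ts * Real.exp (A * (tc - ts)) - ε * v q * Real.exp (A * (tc - q))| ≤
      ρ0 * Real.exp (-σ * γ) * v ts := by
  set δ := ρ0 * exp (-(σ + A) * γ)
  have hB : 0 < A + σ := add_pos hA hσ
  have hε_abs : |ε| = 1 := by rcases hε with rfl | rfl <;> simp
  have hfactor : ∀ t, v t * exp (A * (tc - t)) = v0 * exp (A * tc) * exp (-(A + σ) * t) := by
    intro t
    rw [hv, mul_assoc, mul_assoc, ← exp_add, ← exp_add]
    ring_nf
  have hclose : |-(A + σ) * q - -(A + σ) * ts| ≤ log (1 + δ) := by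
    rw [← mul_sub, abs_mul, abs_neg, abs_of_pos hB, abs_sub_comm]
    rwa [one_div, le_inv_mul_iff₀ hB] at hq
  have hjump := abs_exp_sub_exp_le_of_abs_sub_le_log (by positivity) hclose
  have hdelay : exp (A * tc) * exp (-(A + σ) * ts) * exp (-(σ + A) * γ)
      ≤ exp (-σ * γ) * exp (-σ * ts) := by
    simp only [← exp_add]
    exact exp_le_exp.mpr (by nlinarith)
  calc |ε * v ts * exp (A * (tc - ts)) - ε * v q * exp (A * (tc - q))|
      = v0 * exp (A * tc) * |exp (-(A + σ) * q) - exp (-(A + σ) * ts)| := by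
        rw [mul_assoc ε, mul_assoc ε, hfactor, hfactor, ← mul_sub, ← mul_sub, abs_mul, abs_mul,
          hε_abs, one_mul, abs_of_pos (by positivity), abs_sub_comm]
    _ ≤ v0 * exp (A * tc) * (δ * exp (-(A + σ) * ts)) := by gcongr
    _ = ρ0 * v0 * (exp (A * tc) * exp (-(A + σ) * ts) * exp (-(σ + A) * γ)) := by ring
    _ ≤ ρ0 * v0 * (exp (-σ * γ) * exp (-σ * ts)) := by gcongr
    _ = ρ0 * exp (-σ * γ) * v ts := by rw [hv]; ring

/-- Lemma 5 of the paper: a sufficiently accurate time quantization guarantees the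
required post-jump error bound for every delay realization. -/
theorem time_quantization_post_jump_bound
    (A σ γ v0 ρ0 : ℝ) (hA : 0 < A) (hσ : 0 < σ) (hγ : 0 < γ) (hv0 : 0 < v0)
    (hρ0 : 0 < ρ0) (hρ1 : ρ0 < 1)
    (v : ℝ → ℝ) (hv : ∀ t, v t = v0 * Real.exp (-σ * t))
    (ts tc : ℝ) (h1 : ts ≤ tc) (h2 : tc ≤ ts + γ)
    (ε : ℝ) (hε : ε = -1 ∨ ε = 1)
    (q : ℝ)
    (hq : |ts - q| ≤ (1 / (A + σ)) * Real.log (1 + ρ0 * Real.exp (-(σ + A) * γ))) :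
    |ε * v ts * Real.exp (A * (tc - ts)) - ε * v q * Real.exp (A * (tc - q))| ≤
      ρ0 * Real.exp (-σ * γ) * v ts :=
  time_quantization_post_jump_bound_general A σ γ v0 ρ0 hA hσ hv0 hρ0 v hv ts tc h2 ε hε q hq
end

section
/- Let A, σ, γ > 0, 0 < ρ0 < 1, ν ≥ 2, v0 > 0, and define v(t) = v0·exp(−σt) and β = (1/A)·ln(1 + 2ρ0·exp(−σγ)). Suppose y ∈ ℝ satisfies y ≤ (1/(A+σ))·ln(1 − 1/((ν−1)·(2 + exp(σγ)/ρ0))). Then for every t_s ∈ ℝ and every Δ with β − (1/A)·ln(ν/(ν−1)) ≤ Δ ≤ β, one has v(t_s)·exp(AΔ)·|1 − exp((A+σ)·y)| ≥ (1/ν)·ρ0·exp(−σγ)·v(t_s). -/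
/-!
Both factors are bounded separately. The hypothesis on `y` is exactly
`exp ((A + σ) y) ≤ 1 - ε` with `ε = 1 / ((ν - 1)(2 + exp (σγ) / ρ0))`, so the quantization factor
is at least `ε`; the lower bound on `Δ` gives `exp (A Δ) ≥ (1 + 2c)(ν - 1) / ν` with
`c = ρ0 exp (-σγ)`. Since `2 + 1/c = (1 + 2c)/c`, the product of the two bounds is `c / ν`.
-/

open Real

lemma le_abs_one_sub_exp_mul {k ε y : ℝ} (hk : 0 < k) (hε : ε < 1)
    (hy : y ≤ 1 / k * log (1 - ε)) : ε ≤ |1 - exp (k * y)| := by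
  have hky : k * y ≤ log (1 - ε) := by
    rw [one_div_mul_eq_div, le_div_iff₀ hk, mul_comm] at hy
    exact hy
  have hexp : exp (k * y) ≤ 1 - ε :=
    (exp_le_exp.mpr hky).trans_eq (exp_log (by linarith))
  exact (by linarith : ε ≤ 1 - exp (k * y)).trans (le_abs_self _)

lemma div_le_exp_mul_of_log_sub_log_le {A b r Δ : ℝ} (hA : 0 < A) (hb : 0 < b) (hr : 0 < r)
    (hΔ : 1 / A * log b - 1 / A * log r ≤ Δ) : b / r ≤ exp (A * Δ) := by
  have hlog : log (b / r) ≤ A * Δ := by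
    rw [← mul_sub, ← log_div hb.ne' hr.ne', one_div_mul_eq_div, div_le_iff₀ hA, mul_comm] at hΔ
    exact hΔ
  exact (exp_log (div_pos hb hr)).symm.trans_le (exp_le_exp.mpr hlog)

theorem post_jump_error_lower_bound_for_delays_general
    (A σ γ ρ0 ν v0 : ℝ) (hA : 0 < A) (hσ : 0 < σ)
    (hρ0 : 0 < ρ0) (hν : 2 ≤ ν) (hv0 : 0 < v0)
    (v : ℝ → ℝ) (hv : ∀ t, v t = v0 * Real.exp (-σ * t))
    (β : ℝ) (hβ : β = (1 / A) * Real.log (1 + 2 * ρ0 * Real.exp (-σ * γ)))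
    (y : ℝ)
    (hy : y ≤ (1 / (A + σ)) *
        Real.log (1 - 1 / ((ν - 1) * (2 + Real.exp (σ * γ) / ρ0)))) :
    ∀ ts Δ : ℝ, β - (1 / A) * Real.log (ν / (ν - 1)) ≤ Δ → Δ ≤ β →
      v ts * Real.exp (A * Δ) * |1 - Real.exp ((A + σ) * y)| ≥
        (1 / ν) * ρ0 * Real.exp (-σ * γ) * v ts := by
  intro ts Δ hΔ _
  rw [neg_mul, exp_neg] at hβ ⊢
  set E := exp (σ * γ)
  have hE : 0 < E := exp_pos _
  have hν1 : 0 < ν - 1 := by linarith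
  have hε : 1 / ((ν - 1) * (2 + E / ρ0)) < 1 := by
    rw [div_lt_one (by positivity)]
    nlinarith [div_pos hE hρ0]
  have hquant := le_abs_one_sub_exp_mul (by linarith) hε hy
  have hdelay := div_le_exp_mul_of_log_sub_log_le (b := 1 + 2 * ρ0 * E⁻¹) hA (by positivity)
    (by positivity : (0 : ℝ) < ν / (ν - 1)) (hβ ▸ hΔ)
  have hvts : 0 ≤ v ts := by rw [hv]; positivity
  calc (1 / ν) * ρ0 * E⁻¹ * v ts
      = v ts * ((1 + 2 * ρ0 * E⁻¹) / (ν / (ν - 1))) * (1 / ((ν - 1) * (2 + E / ρ0))) := by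
        field_simp
        ring
    _ ≤ v ts * exp (A * Δ) * |1 - exp ((A + σ) * y)| := by gcongr

/-- Claim (a) in the proof of Theorem 4 of the paper: existence of delay values for which
the post-jump error is at least ρ(t_s)/ν. -/
theorem post_jump_error_lower_bound_for_delays
    (A σ γ ρ0 ν v0 : ℝ) (hA : 0 < A) (hσ : 0 < σ) (hγ : 0 < γ)
    (hρ0 : 0 < ρ0) (hρ1 : ρ0 < 1) (hν : 2 ≤ ν) (hv0 : 0 < v0)
    (v : ℝ → ℝ) (hv : ∀ t, v t = v0 * Real.exp (-σ * t))
    (β : ℝ) (hβ : β = (1 / A) * Real.log (1 + 2 * ρ0 * Real.exp (-σ * γ)))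
    (y : ℝ)
    (hy : y ≤ (1 / (A + σ)) *
        Real.log (1 - 1 / ((ν - 1) * (2 + Real.exp (σ * γ) / ρ0)))) :
    ∀ ts Δ : ℝ, β - (1 / A) * Real.log (ν / (ν - 1)) ≤ Δ → Δ ≤ β →
      v ts * Real.exp (A * Δ) * |1 - Real.exp ((A + σ) * y)| ≥
        (1 / ν) * ρ0 * Real.exp (-σ * γ) * v ts :=
  post_jump_error_lower_bound_for_delays_general A σ γ ρ0 ν v0 hA hσ hρ0 hν hv0 v hv β hβ y hy
end

section
/- Let n ≥ 1, let A be a real n×n matrix, let t > 0, σ > 0, L > 0, r > 0, and let α ∈ ℝⁿ (Euclidean space). Define Γ = {exp(tA)·x + α : ‖x‖ ≤ L}, the image of the closed Euclidean ball of radius L under the matrix exponential exp(tA) followed by translation by α. If Γ is contained in the union of N closed Euclidean balls of radius r·exp(−σt), then N ≥ exp((trace(A) + nσ)·t)·(L/r)ⁿ. -/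
/-! The affine map `x ↦ exp (t A) x + α` multiplies Lebesgue measure by
`det (exp (t A)) = exp (t · tr A)` (Liouville's formula: `u ↦ det (exp (u A))` is a multiplicative
function of `u` whose derivative at `0` is `tr A`, the derivative of `det` at the identity).
So `Γ` has volume `exp (t · tr A) Lⁿ` times that of the unit ball, while the `N` covering balls
have total volume at most `N rⁿ exp (-nσt)` times it. -/

open Finset Equiv NormedSpace MeasureTheory Metric Module

theorem eq_mul_exp_of_hasDerivAt_mul_const {f : ℝ → ℝ} {c : ℝ}
    (hf : ∀ x, HasDerivAt f (f x * c) x) (x : ℝ) : f x = f 0 * Real.exp (x * c) := by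
  have hconst : ∀ y, HasDerivAt (fun y => f y * Real.exp (-(y * c))) 0 y := fun y => by
    refine ((hf y).mul (hasDerivAt_mul_const c).neg.exp).congr_deriv ?_
    ring
  have := is_const_of_deriv_eq_zero (fun y => (hconst y).differentiableAt)
    (fun y => (hconst y).deriv) x 0
  rw [Real.exp_neg] at this
  simp only [zero_mul, neg_zero, Real.exp_zero, mul_one] at this
  rw [← this, inv_mul_cancel_right₀ (Real.exp_ne_zero _)]

namespace Matrix

variable {ι : Type*} [Fintype ι] [DecidableEq ι]

theorem prod_erase_one_apply_perm_eq_zero {R : Type*} [CommRing R] {σ : Perm ι} (hσ : σ ≠ 1)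
    (i : ι) : ∏ j ∈ univ.erase i, (1 : Matrix ι ι R) (σ j) j = 0 := by
  obtain ⟨k, hk, hki⟩ := exists_mem_ne (Perm.two_le_card_support_of_ne_one hσ) i
  exact prod_eq_zero (mem_erase.2 ⟨hki, mem_univ k⟩) (one_apply_ne (Perm.mem_support.1 hk))

theorem hasDerivAt_det_of_eq_one {𝕜 : Type*} [NontriviallyNormedField 𝕜]
    {M : 𝕜 → Matrix ι ι 𝕜} {M' : Matrix ι ι 𝕜} {x : 𝕜}
    (hM : ∀ i j, HasDerivAt (fun u => M u i j) (M' i j) x) (hx : M x = 1) :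
    HasDerivAt (fun u => (M u).det) M'.trace x := by
  simp_rw [det_apply]
  have hterm (σ : Perm ι) : HasDerivAt (fun u => Perm.sign σ • ∏ i, M u (σ i) i)
      (Perm.sign σ • ∑ i, (∏ j ∈ univ.erase i, (1 : Matrix ι ι 𝕜) (σ j) j) * M' (σ i) i) x := by
    have := HasDerivAt.fun_finsetProd (u := univ) fun i _ => hM (σ i) i
    simp only [hx, smul_eq_mul] at this
    exact this.const_smul _
  refine (HasDerivAt.fun_sum fun σ _ => hterm σ).congr_deriv ?_
  rw [sum_eq_single (1 : Perm ι)]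
  · simp [trace, one_apply]
  · intro σ _ hσ
    simp [prod_erase_one_apply_perm_eq_zero hσ]
  · simp

section

-- `exp` does not depend on a norm; one is chosen only to differentiate it.
attribute [local instance] Matrix.linftyOpNormedRing Matrix.linftyOpNormedAlgebra

theorem hasDerivAt_exp_smul_apply_zero (A : Matrix ι ι ℝ) (i j : ι) :
    HasDerivAt (fun u : ℝ => exp (u • A) i j) (A i j) 0 := by
  have hexp := hasDerivAt_exp_smul_const (𝕂 := ℝ) A 0
  rw [zero_smul, exp_zero, one_mul] at hexp
  exact ((entryLinearMap ℝ ℝ i j).toContinuousLinearMap.hasFDerivAt).comp_hasDerivAt 0 hexp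

end

theorem det_exp_smul (A : Matrix ι ι ℝ) (s : ℝ) :
    (exp (s • A)).det = Real.exp (s * A.trace) := by
  set φ : ℝ → ℝ := fun u => (exp (u • A)).det
  have hadd (a b : ℝ) : φ (a + b) = φ a * φ b := by
    simp only [φ, add_smul,
      exp_add_of_commute _ _ (((Commute.refl A).smul_left a).smul_right b), det_mul]
  have hderiv_zero : HasDerivAt φ A.trace 0 :=
    hasDerivAt_det_of_eq_one (hasDerivAt_exp_smul_apply_zero A) (by simp)
  have hderiv (u : ℝ) : HasDerivAt φ (φ u * A.trace) u := by
    have hshift : HasDerivAt (fun v => φ u * φ (v - u)) (φ u * A.trace) u :=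
      ((sub_self u ▸ hderiv_zero).comp_sub_const u u).const_mul (φ u)
    convert hshift using 1
    funext v
    rw [← hadd, add_sub_cancel]
  simpa [φ] using eq_mul_exp_of_hasDerivAt_mul_const hderiv s

theorem det_toEuclideanLin (M : Matrix ι ι ℝ) : LinearMap.det (toEuclideanLin M) = M.det := by
  rw [toEuclideanLin_eq_toLin_orthonormal, LinearMap.det_toLin]

end Matrix

theorem measure_image_linearMap_add_const {E : Type*} [NormedAddCommGroup E] [NormedSpace ℝ E]
    [MeasurableSpace E] [BorelSpace E] [FiniteDimensional ℝ E] (μ : Measure E)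
    [μ.IsAddHaarMeasure] (f : E →ₗ[ℝ] E) (a : E) (s : Set E) :
    μ ((fun x => f x + a) '' s) = ENNReal.ofReal |LinearMap.det f| * μ s := by
  rw [← Set.image_image (· + a) f, Set.image_add_right, measure_preimage_add_right,
    Measure.addHaar_image_linearMap]

theorem abs_det_mul_pow_le_card_mul_pow_of_image_closedBall_subset {E ι : Type*}
    [NormedAddCommGroup E] [NormedSpace ℝ E] [FiniteDimensional ℝ E] [Fintype ι]
    (f : E →ₗ[ℝ] E) (a : E) (c : ι → E) {L ρ : ℝ} (hL : 0 ≤ L) (hρ : 0 ≤ ρ)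
    (hcov : (fun x => f x + a) '' closedBall 0 L ⊆ ⋃ i, closedBall (c i) ρ) :
    |LinearMap.det f| * L ^ finrank ℝ E ≤ Fintype.card ι * ρ ^ finrank ℝ E := by
  borelize E
  set μ : Measure E := Measure.addHaar
  set K := μ (closedBall 0 1)
  have hK₀ : K ≠ 0 := (measure_closedBall_pos μ 0 one_pos).ne'
  have hK : K ≠ ⊤ := measure_closedBall_lt_top.ne
  have hvol : ENNReal.ofReal (|LinearMap.det f| * L ^ finrank ℝ E) * K ≤
      ENNReal.ofReal (Fintype.card ι * ρ ^ finrank ℝ E) * K :=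
    calc ENNReal.ofReal (|LinearMap.det f| * L ^ finrank ℝ E) * K
        = μ ((fun x => f x + a) '' closedBall 0 L) := by
          rw [measure_image_linearMap_add_const, Measure.addHaar_closedBall' μ _ hL,
            ENNReal.ofReal_mul (abs_nonneg _), mul_assoc]
      _ ≤ ∑ i, μ (closedBall (c i) ρ) := (measure_mono hcov).trans (measure_iUnion_fintype_le μ _)
      _ = ENNReal.ofReal (Fintype.card ι * ρ ^ finrank ℝ E) * K := by
          simp only [Measure.addHaar_closedBall' μ _ hρ, sum_const, card_univ, nsmul_eq_mul]
          rw [ENNReal.ofReal_mul (Nat.cast_nonneg _), ENNReal.ofReal_natCast, mul_assoc]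
  rwa [ENNReal.mul_le_mul_iff_left hK₀ hK, ENNReal.ofReal_le_ofReal_iff (by positivity)] at hvol

theorem vector_covering_state_uncertainty_lower_bound_general
    (n : ℕ) (A : Matrix (Fin n) (Fin n) ℝ)
    (t σ L r : ℝ) (hL : 0 < L) (hr : 0 < r)
    (α : EuclideanSpace ℝ (Fin n))
    (N : ℕ) (c : Fin N → EuclideanSpace ℝ (Fin n))
    (hcov : (fun x : EuclideanSpace ℝ (Fin n) =>
        Matrix.toEuclideanLin (NormedSpace.exp (t • A)) x + α) ''
          Metric.closedBall 0 L ⊆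
      ⋃ i, Metric.closedBall (c i) (r * Real.exp (-σ * t))) :
    (N : ℝ) ≥ Real.exp ((Matrix.trace A + n * σ) * t) * (L / r) ^ n := by
  have hdet : LinearMap.det (Matrix.toEuclideanLin (exp (t • A))) = Real.exp (t * A.trace) := by
    rw [Matrix.det_toEuclideanLin, Matrix.det_exp_smul]
  have hvol := abs_det_mul_pow_le_card_mul_pow_of_image_closedBall_subset _ α c hL.le
    (by positivity) hcov
  rw [hdet, abs_of_pos (Real.exp_pos _), finrank_euclideanSpace_fin, Fintype.card_fin] at hvol
  calc Real.exp ((A.trace + n * σ) * t) * (L / r) ^ n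
      = Real.exp (t * A.trace) * L ^ n / (r * Real.exp (-σ * t)) ^ n := by
        rw [mul_pow, ← Real.exp_nat_mul, div_pow,
          show (A.trace + n * σ) * t = t * A.trace - n * (-σ * t) by ring, Real.exp_sub]
        field_simp
    _ ≤ N := (div_le_iff₀ (by positivity)).2 hvol

/-- Covering argument proving Theorem 5(i) of the paper (vector case). -/
theorem vector_covering_state_uncertainty_lower_bound
    (n : ℕ) (hn : 1 ≤ n) (A : Matrix (Fin n) (Fin n) ℝ)
    (t σ L r : ℝ) (ht : 0 < t) (hσ : 0 < σ) (hL : 0 < L) (hr : 0 < r)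
    (α : EuclideanSpace ℝ (Fin n))
    (N : ℕ) (c : Fin N → EuclideanSpace ℝ (Fin n))
    (hcov : (fun x : EuclideanSpace ℝ (Fin n) =>
        Matrix.toEuclideanLin (NormedSpace.exp (t • A)) x + α) ''
          Metric.closedBall 0 L ⊆
      ⋃ i, Metric.closedBall (c i) (r * Real.exp (-σ * t))) :
    (N : ℝ) ≥ Real.exp ((Matrix.trace A + n * σ) * t) * (L / r) ^ n :=
  vector_covering_state_uncertainty_lower_bound_general n A t σ L r hL hr α N c hcov
end

section
/- Let n ≥ 1, let A be a real n×n matrix, let t ≥ 0, σ > 0, L > 0. (i) For every α ∈ ℝⁿ (Euclidean space), the set {x ∈ ℝⁿ : ‖exp(tA)·x + α‖ ≤ L·exp(−σt)} has Lebesgue measure exp(−t·trace(A))·exp(−nσt) times the volume of the closed Euclidean ball of radius L. (ii) Consequently, if the closed ball {x : ‖x‖ ≤ L} is contained in ⋃_{i=1}^N {x ∈ ℝⁿ : ‖exp(tA)·x + α_i‖ ≤ L·exp(−σt)} for some α_1, …, α_N ∈ ℝⁿ, then N ≥ exp((trace(A) + nσ)·t). -/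
/-!
The set in (i) is the preimage of a closed ball of radius `L e^{-σt}` under the linear map
`exp (tA)`, so by Haar-measure scaling its volume is `|det exp (tA)|⁻¹ e^{-nσt}` times the volume of
the ball of radius `L`; and `det exp (tA) = e^{t tr A}` because `u ↦ det exp (uA)` is a
differentiable homomorphism `(ℝ, +) → (ℝ, ·)` whose derivative at `0` is the derivative of `det`
at `1` in the direction `A`, namely `tr A`. For (ii), the ball of radius `L` has positive finite
volume and is covered by `N` sets, each of volume `e^{-(tr A + nσ)t}` times its own, so
`N e^{-(tr A + nσ)t} ≥ 1`.
-/

open MeasureTheory NormedSpace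

theorem Real.eq_exp_mul_of_map_add_eq_mul {f : ℝ → ℝ} {c : ℝ}
    (hadd : ∀ x y, f (x + y) = f x * f y) (h0 : f 0 = 1) (hderiv : HasDerivAt f c 0) (t : ℝ) :
    f t = Real.exp (c * t) := by
  have hf' (s : ℝ) : HasDerivAt f (f s * c) s := by
    have h := (HasDerivAt.comp_sub_const s s (by rwa [sub_self])).const_mul (f s)
    refine h.congr_of_eventuallyEq (.of_forall fun u => ?_)
    simp only [← hadd, add_sub_cancel]
  have hconst (s : ℝ) : HasDerivAt (fun x => f x * Real.exp (-(c * x))) 0 s := by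
    have he : HasDerivAt (fun x => Real.exp (-(c * x))) (Real.exp (-(c * s)) * -c) s := by
      simpa using ((hasDerivAt_id s).const_mul c).neg.exp
    exact ((hf' s).mul he).congr_deriv (by ring)
  have h := is_const_of_deriv_eq_zero (fun x => (hconst x).differentiableAt)
    (fun x => (hconst x).deriv) t 0
  rwa [h0, mul_zero, neg_zero, Real.exp_zero, mul_one, Real.exp_neg,
    mul_inv_eq_one₀ (Real.exp_ne_zero _)] at h

section
variable {𝕜 ι : Type*} [Fintype ι] [DecidableEq ι]

theorem Matrix.hasDerivAt_det_one_add_smul [NontriviallyNormedField 𝕜] (A : Matrix ι ι 𝕜) :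
    HasDerivAt (fun u : 𝕜 => (1 + u • A).det) A.trace 0 := by
  set q := (1 + (Polynomial.X : Polynomial 𝕜) • A.map Polynomial.C).det.divX.divX
  have hquad : HasDerivAt (fun u => q.eval u * u ^ 2) 0 0 :=
    ((q.hasDerivAt 0).mul (hasDerivAt_pow 2 0)).congr_deriv (by simp)
  have h : HasDerivAt (fun u : 𝕜 => 1 + A.trace * u + q.eval u * u ^ 2) A.trace 0 := by
    simpa using (((hasDerivAt_id 0).const_mul A.trace).const_add 1).fun_add hquad
  exact h.congr_of_eventuallyEq (.of_forall fun u => det_one_add_smul u A)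

variable [RCLike 𝕜]
attribute [local instance] Matrix.linftyOpNormedAddCommGroup Matrix.linftyOpNormedRing
  Matrix.linftyOpNormedAlgebra

theorem Matrix.differentiable_det : Differentiable 𝕜 (Matrix.det : Matrix ι ι 𝕜 → 𝕜) := by
  have hentry (i j : ι) : Differentiable 𝕜 fun M : Matrix ι ι 𝕜 => M i j :=
    (Matrix.entryLinearMap 𝕜 𝕜 i j).toContinuousLinearMap.differentiable
  simp_rw [funext Matrix.det_apply']
  fun_prop

theorem Matrix.hasDerivAt_det_comp_of_eq_one {γ : 𝕜 → Matrix ι ι 𝕜} {A : Matrix ι ι 𝕜}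
    (hγ : HasDerivAt γ A 0) (hγ0 : γ 0 = 1) :
    HasDerivAt (fun u => (γ u).det) A.trace 0 := by
  have hdet : HasFDerivAt Matrix.det (fderiv 𝕜 Matrix.det 1) (1 : Matrix ι ι 𝕜) :=
    (differentiable_det _).hasFDerivAt
  have hline : HasDerivAt (fun u : 𝕜 => (1 : Matrix ι ι 𝕜) + u • A) A 0 := by
    have h := ((hasDerivAt_id (0 : 𝕜)).smul_const A).const_add (1 : Matrix ι ι 𝕜)
    rwa [one_smul] at h
  -- the line `u ↦ 1 + u • A` has the same position and velocity as `γ` at `0`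
  have htrace : fderiv 𝕜 Matrix.det 1 A = A.trace := by
    refine (HasFDerivAt.comp_hasDerivAt (x := 0) ?_ hline).unique (hasDerivAt_det_one_add_smul A)
    rwa [zero_smul, add_zero]
  rw [← htrace]
  exact HasFDerivAt.comp_hasDerivAt (x := 0) (by rwa [hγ0]) hγ

theorem Matrix.det_exp_smul_s15 (A : Matrix ι ι ℝ) (t : ℝ) :
    (exp (t • A)).det = Real.exp (A.trace * t) := by
  refine Real.eq_exp_mul_of_map_add_eq_mul (f := fun u => (exp (u • A)).det) (fun x y => ?_)
    (by simp) (hasDerivAt_det_comp_of_eq_one ?_ (by simp)) t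
  · rw [add_smul, Matrix.exp_add_of_commute _ _ (((Commute.refl A).smul_left x).smul_right y),
      det_mul]
  · have h := hasDerivAt_exp_smul_const A (0 : ℝ)
    rwa [zero_smul, exp_zero, one_mul] at h

end

theorem Matrix.det_toEuclideanLin_s15 {𝕜 ι : Type*} [RCLike 𝕜] [Fintype ι] [DecidableEq ι]
    (M : Matrix ι ι 𝕜) : LinearMap.det M.toEuclideanLin = M.det := by
  have h : M.toEuclideanLin = (WithLp.linearEquiv 2 𝕜 (ι → 𝕜)).symm.toLinearMap ∘ₗ
      M.toLin' ∘ₗ (WithLp.linearEquiv 2 𝕜 (ι → 𝕜)).symm.symm.toLinearMap := rfl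
  rw [h, LinearMap.det_conj, LinearMap.det_toLin']

theorem MeasureTheory.Measure.addHaar_setOf_norm_map_add_le {E : Type*} [NormedAddCommGroup E]
    [NormedSpace ℝ E] [MeasurableSpace E] [BorelSpace E] [FiniteDimensional ℝ E] (μ : Measure E)
    [μ.IsAddHaarMeasure] {T : E →ₗ[ℝ] E} (hT : LinearMap.det T ≠ 0) (a : E) {c r : ℝ}
    (hc : 0 ≤ c) (hr : 0 ≤ r) :
    μ {x | ‖T x + a‖ ≤ c * r} = ENNReal.ofReal (|(LinearMap.det T)⁻¹| * c ^ Module.finrank ℝ E) *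
      μ (Metric.closedBall 0 r) := by
  have hpre : {x | ‖T x + a‖ ≤ c * r} = T ⁻¹' Metric.closedBall (-a) (c * r) := by
    ext x
    simp [dist_eq_norm]
  rw [hpre, addHaar_preimage_linearMap μ hT, addHaar_closedBall_mul μ _ hc hr,
    ENNReal.ofReal_mul (abs_nonneg _), mul_assoc]

theorem MeasureTheory.one_le_card_mul_of_subset_iUnion {α ι : Type*} [MeasurableSpace α]
    [Fintype ι] {μ : Measure α} {s : Set α} {t : ι → Set α} {c : ENNReal} (hs₀ : μ s ≠ 0)
    (hs : μ s ≠ ⊤) (ht : ∀ i, μ (t i) ≤ c * μ s) (hst : s ⊆ ⋃ i, t i) :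
    1 ≤ Fintype.card ι * c := by
  have h : μ s ≤ Fintype.card ι * c * μ s :=
    calc μ s ≤ ∑ i, μ (t i) := (measure_mono hst).trans (measure_iUnion_fintype_le μ t)
      _ ≤ ∑ _i : ι, c * μ s := Finset.sum_le_sum fun i _ => ht i
      _ = Fintype.card ι * c * μ s := by rw [Finset.sum_const, Finset.card_univ, nsmul_eq_mul, mul_assoc]
  rwa [← ENNReal.mul_le_mul_iff_left hs₀ hs, one_mul]

theorem vector_initial_condition_covering_lower_bound_general
    (n : ℕ) (A : Matrix (Fin n) (Fin n) ℝ)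
    (t σ L : ℝ) (hL : 0 < L) :
    (∀ α : EuclideanSpace ℝ (Fin n),
      volume {x : EuclideanSpace ℝ (Fin n) |
          ‖Matrix.toEuclideanLin (NormedSpace.exp (t • A)) x + α‖ ≤ L * Real.exp (-σ * t)} =
        ENNReal.ofReal (Real.exp (-(t * Matrix.trace A)) * Real.exp (-(n * σ * t))) *
          volume (Metric.closedBall (0 : EuclideanSpace ℝ (Fin n)) L)) ∧
    (∀ (N : ℕ) (α : Fin N → EuclideanSpace ℝ (Fin n)),
      Metric.closedBall (0 : EuclideanSpace ℝ (Fin n)) L ⊆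
        ⋃ i, {x : EuclideanSpace ℝ (Fin n) |
          ‖Matrix.toEuclideanLin (NormedSpace.exp (t • A)) x + α i‖ ≤ L * Real.exp (-σ * t)} →
      (N : ℝ) ≥ Real.exp ((Matrix.trace A + n * σ) * t)) := by
  have hdet : LinearMap.det (exp (t • A)).toEuclideanLin = Real.exp (A.trace * t) := by
    rw [Matrix.det_toEuclideanLin_s15, Matrix.det_exp_smul_s15]
  have hvol (α : EuclideanSpace ℝ (Fin n)) :
      volume {x | ‖(exp (t • A)).toEuclideanLin x + α‖ ≤ L * Real.exp (-σ * t)} =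
        ENNReal.ofReal (Real.exp (-(t * A.trace)) * Real.exp (-(n * σ * t))) *
          volume (Metric.closedBall (0 : EuclideanSpace ℝ (Fin n)) L) := by
    rw [mul_comm L, Measure.addHaar_setOf_norm_map_add_le volume (hdet ▸ (Real.exp_pos _).ne') α
      (Real.exp_pos _).le hL.le, hdet, finrank_euclideanSpace_fin, ← Real.exp_neg,
      abs_of_pos (Real.exp_pos _), ← Real.exp_nat_mul]
    ring_nf
  refine ⟨hvol, fun N α hcover => ?_⟩
  have h := one_le_card_mul_of_subset_iUnion (Metric.measure_closedBall_pos volume _ hL).ne'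
    measure_closedBall_lt_top.ne (fun i => (hvol (α i)).le) hcover
  rw [Fintype.card_fin, ← ENNReal.ofReal_natCast, ← ENNReal.ofReal_mul (Nat.cast_nonneg _),
    ENNReal.one_le_ofReal, ← Real.exp_add, ← neg_add, Real.exp_neg,
    le_mul_inv_iff₀ (Real.exp_pos _), one_mul] at h
  rwa [ge_iff_le, add_mul, mul_comm A.trace]

/-- Covering argument proving Theorem 5(ii) of the paper (vector case). -/
theorem vector_initial_condition_covering_lower_bound
    (n : ℕ) (hn : 1 ≤ n) (A : Matrix (Fin n) (Fin n) ℝ)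
    (t σ L : ℝ) (ht : 0 ≤ t) (hσ : 0 < σ) (hL : 0 < L) :
    (∀ α : EuclideanSpace ℝ (Fin n),
      volume {x : EuclideanSpace ℝ (Fin n) |
          ‖Matrix.toEuclideanLin (NormedSpace.exp (t • A)) x + α‖ ≤ L * Real.exp (-σ * t)} =
        ENNReal.ofReal (Real.exp (-(t * Matrix.trace A)) * Real.exp (-(n * σ * t))) *
          volume (Metric.closedBall (0 : EuclideanSpace ℝ (Fin n)) L)) ∧
    (∀ (N : ℕ) (α : Fin N → EuclideanSpace ℝ (Fin n)),
      Metric.closedBall (0 : EuclideanSpace ℝ (Fin n)) L ⊆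
        ⋃ i, {x : EuclideanSpace ℝ (Fin n) |
          ‖Matrix.toEuclideanLin (NormedSpace.exp (t • A)) x + α i‖ ≤ L * Real.exp (-σ * t)} →
      (N : ℝ) ≥ Real.exp ((Matrix.trace A + n * σ) * t)) :=
  vector_initial_condition_covering_lower_bound_general n A t σ L hL
end

section
/- Let λ, σ, γ > 0 and let ρ′, ρ0 satisfy 0 < ρ′ < ρ0 < 1. Let v, v′ > 0 satisfy v′ ≤ v·(λ+σ)·(ρ0 − ρ′) / ( ((ρ0 − ρ′) + exp((λ+σ)γ)) · (exp((λ+σ)γ) − 1) ). Let t ∈ ℝ and let z : ℝ → ℝ be a measurable function with |z(τ)| ≤ v′·exp((σ+λ)γ)·exp(−στ) for all τ ∈ [t − γ, t]. Then |∫_{t−γ}^{t} exp(λ·(t − τ))·z(τ) dτ| ≤ (ρ0 − ρ′)·v·exp(−σt). -/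
/-! With `E = exp ((λ + σ) γ)`, integrating the envelope exactly gives
`|∫| ≤ v' E (E - 1) / (λ + σ) · exp (-σ t)`, and the cascade condition bounds `v' E (E - 1)` by
`(ρ0 - ρ') v (λ + σ)` because its denominator carries the extra summand `ρ0 - ρ' > 0`. -/

open Real intervalIntegral

lemma integral_exp_mul_exp_neg (lam σ t γ : ℝ) (hc : lam + σ ≠ 0) :
    ∫ τ in (t - γ)..t, exp (lam * (t - τ)) * exp (-σ * τ) =
      exp (-σ * t) * (exp ((lam + σ) * γ) - 1) / (lam + σ) := by
  have hderiv : ∀ τ ∈ Set.uIcc (t - γ) t,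
      HasDerivAt (fun τ => -exp (lam * t - (lam + σ) * τ) / (lam + σ))
        (exp (lam * (t - τ)) * exp (-σ * τ)) τ := by
    intro τ _
    refine ((((hasDerivAt_id τ).const_mul (lam + σ)).const_sub (lam * t)).exp.neg.div_const
      (lam + σ)).congr_deriv ?_
    rw [id, ← exp_add]
    field_simp
    ring_nf
  rw [integral_eq_sub_of_hasDerivAt hderiv (by apply Continuous.intervalIntegrable; fun_prop)]
  have hshift : exp (lam * t - (lam + σ) * (t - γ)) = exp (-σ * t) * exp ((lam + σ) * γ) := by
    rw [← exp_add]; ring_nf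
  rw [hshift, show lam * t - (lam + σ) * t = -σ * t by ring]
  ring

lemma abs_integral_exp_mul_le_of_abs_le_exp (lam σ γ K t : ℝ) (z : ℝ → ℝ) (hc : lam + σ ≠ 0)
    (hγ : 0 ≤ γ) (hz : ∀ τ ∈ Set.Icc (t - γ) t, |z τ| ≤ K * exp (-σ * τ)) :
    |∫ τ in (t - γ)..t, exp (lam * (t - τ)) * z τ| ≤
      K * (exp (-σ * t) * (exp ((lam + σ) * γ) - 1) / (lam + σ)) := by
  have hbound : ∀ᵐ τ, τ ∈ Set.Ioc (t - γ) t →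
      ‖exp (lam * (t - τ)) * z τ‖ ≤ K * (exp (lam * (t - τ)) * exp (-σ * τ)) := by
    refine .of_forall fun τ hτ => ?_
    rw [norm_mul, norm_of_nonneg (exp_pos _).le, Real.norm_eq_abs, mul_left_comm]
    exact mul_le_mul_of_nonneg_left (hz τ (Set.Ioc_subset_Icc_self hτ)) (exp_pos _).le
  have h := norm_integral_le_of_norm_le (by linarith) hbound
    (by apply Continuous.intervalIntegrable; fun_prop)
  rwa [Real.norm_eq_abs, integral_const_mul, integral_exp_mul_exp_neg lam σ t γ hc] at h

lemma mul_mul_sub_one_le_of_le_div {v v' c d E : ℝ} (hv' : 0 ≤ v') (hd : 0 < d) (hE : 1 < E)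
    (hcascade : v' ≤ v * c * d / ((d + E) * (E - 1))) :
    v' * E * (E - 1) ≤ d * v * c := by
  have hden : 0 < (d + E) * (E - 1) := mul_pos (by linarith) (by linarith)
  have h := (le_div_iff₀ hden).mp hcascade
  nlinarith [mul_nonneg hv' (sub_pos.mpr hE).le]

theorem coupling_integral_cascade_bound_general
    (lam σ γ ρ' ρ0 : ℝ) (hlam : 0 < lam) (hσ : 0 < σ) (hγ : 0 < γ)
    (hρ'ρ0 : ρ' < ρ0)
    (v v' : ℝ) (hv' : 0 < v')
    (hcascade : v' ≤ v * (lam + σ) * (ρ0 - ρ') /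
      (((ρ0 - ρ') + Real.exp ((lam + σ) * γ)) * (Real.exp ((lam + σ) * γ) - 1)))
    (t : ℝ) (z : ℝ → ℝ)
    (hz : ∀ τ ∈ Set.Icc (t - γ) t,
      |z τ| ≤ v' * Real.exp ((σ + lam) * γ) * Real.exp (-σ * τ)) :
    |∫ τ in (t - γ)..t, Real.exp (lam * (t - τ)) * z τ| ≤
      (ρ0 - ρ') * v * Real.exp (-σ * t) := by
  have hc : 0 < lam + σ := by linarith
  have hE : 1 < exp ((lam + σ) * γ) := one_lt_exp_iff.mpr (mul_pos hc hγ)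
  rw [add_comm σ lam] at hz
  have hgain := mul_mul_sub_one_le_of_le_div hv'.le (sub_pos.mpr hρ'ρ0) hE hcascade
  calc |∫ τ in (t - γ)..t, exp (lam * (t - τ)) * z τ|
      ≤ v' * exp ((lam + σ) * γ) * (exp (-σ * t) * (exp ((lam + σ) * γ) - 1) / (lam + σ)) :=
        abs_integral_exp_mul_le_of_abs_le_exp lam σ γ _ t z hc.ne' hγ.le hz
    _ = v' * exp ((lam + σ) * γ) * (exp ((lam + σ) * γ) - 1) / (lam + σ) * exp (-σ * t) := by
        ring
    _ ≤ (ρ0 - ρ') * v * exp (-σ * t) := by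
        gcongr
        rwa [div_le_iff₀ hc]

/-- Inequality (uppercoup) of the paper: the coupling integral term from coordinate i
into coordinate i−1 is bounded by (ρ0 − ρ′)·v·exp(−σt). -/
theorem coupling_integral_cascade_bound
    (lam σ γ ρ' ρ0 : ℝ) (hlam : 0 < lam) (hσ : 0 < σ) (hγ : 0 < γ)
    (hρ' : 0 < ρ') (hρ'ρ0 : ρ' < ρ0) (hρ0 : ρ0 < 1)
    (v v' : ℝ) (hv : 0 < v) (hv' : 0 < v')
    (hcascade : v' ≤ v * (lam + σ) * (ρ0 - ρ') /
      (((ρ0 - ρ') + Real.exp ((lam + σ) * γ)) * (Real.exp ((lam + σ) * γ) - 1)))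
    (t : ℝ) (z : ℝ → ℝ) (hmeas : Measurable z)
    (hz : ∀ τ ∈ Set.Icc (t - γ) t,
      |z τ| ≤ v' * Real.exp ((σ + lam) * γ) * Real.exp (-σ * τ)) :
    |∫ τ in (t - γ)..t, Real.exp (lam * (t - τ)) * z τ| ≤
      (ρ0 - ρ') * v * Real.exp (-σ * t) :=
  coupling_integral_cascade_bound_general lam σ γ ρ' ρ0 hlam hσ hγ hρ'ρ0 v v' hv' hcascade t z hz
end
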